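/- arXiv:2302.08190 — 2 statements merged into one kernel-verified Lean document; each statement's English description precedes it below -/
import Mathlib

section
/- Fix finite sets X, A, horizon N ≥ 1, transition kernels p_n, initial distribution μ0 ∈ Δ_{X×A}. Let f_n : Δ_{X×A} → ℝ (1 ≤ n ≤ N) be convex and differentiable, define the potential-game reward r_n(x,a,ν) = −∇f_n(ν)(x,a) and the payoff J(π, μ) = Σ_{n=1}^N Σ_{(x,a)} r_n(x,a,μ_n)·μ^π_n(x,a). Then a policy sequence π* minimizes π ↦ Σ_{n=1}^N f_n(μ^π_n) over all policy sequences if and only if (μ^{π*}, π*) is a Nash equilibrium, i.e. J(π*, μ^{π*}) ≥ J(π, μ^{π*}) for every policy sequence π. -/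
open Finset Filter Topology

/-- A probability distribution on a finite type, viewed as a nonnegative
function summing to one. -/
def IsDist {S : Type*} [Fintype S] (μ : S → ℝ) : Prop :=
  (∀ z, 0 ≤ μ z) ∧ ∑ z, μ z = 1

/-- The state-action distribution sequence induced by a policy sequence `π`
from the initial distribution `μ0`, with transition kernels `p`. -/
noncomputable def induced {X A : Type*} [Fintype X] [Fintype A]
    (μ0 : X × A → ℝ) (p : ℕ → X → A → X → ℝ) (π : ℕ → X → A → ℝ) :
    ℕ → X × A → ℝ
  | 0 => μ0
  | n + 1 => fun y =>
      ∑ z : X × A, induced μ0 p π n z * p (n + 1) z.1 z.2 y.1 * π (n + 1) y.1 y.2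

/-- A policy sequence: `π_n(·|x) ∈ Δ_A` for all `1 ≤ n ≤ N` and `x ∈ X`. -/
def IsPolicy {X A : Type*} [Fintype A] (N : ℕ) (π : ℕ → X → A → ℝ) : Prop :=
  ∀ n x, 1 ≤ n → n ≤ N → IsDist (π n x)

lemma grad_ineq {E : Type*} [NormedAddCommGroup E] [NormedSpace ℝ E] {s : Set E}
    {f : E → ℝ} (hf : ConvexOn ℝ s f) (hd : Differentiable ℝ f)
    {μ ν : E} (hμ : μ ∈ s) (hν : ν ∈ s) :
    fderiv ℝ f μ (ν - μ) ≤ f ν - f μ := by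
  set φ : ℝ → ℝ := fun t => f (μ + t • (ν - μ)) with hφdef
  have hline : HasDerivAt (fun t : ℝ => μ + t • (ν - μ)) (ν - μ) 0 := by
    simpa using ((hasDerivAt_id (0:ℝ)).smul_const (ν - μ)).const_add μ
  have hfd : HasFDerivAt f (fderiv ℝ f μ) (μ + (0:ℝ) • (ν - μ)) := by
    simpa using (hd μ).hasFDerivAt
  have hφ : HasDerivAt φ (fderiv ℝ f μ (ν - μ)) 0 := by
    have := hfd.comp_hasDerivAt 0 hline
    exact this
  have htend : Tendsto (slope φ 0) (𝓝[>] 0) (𝓝 (fderiv ℝ f μ (ν - μ))) :=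
    (hasDerivAt_iff_tendsto_slope.mp hφ).mono_left
      (nhdsWithin_mono _ (fun t ht => ne_of_gt ht))
  refine le_of_tendsto htend ?_
  filter_upwards [Ioc_mem_nhdsGT_of_mem (by norm_num : (0:ℝ) ∈ Set.Ico (0:ℝ) 1)] with t ht
  have key : f ((1 - t) • μ + t • ν) ≤ (1 - t) * f μ + t * f ν :=
    hf.2 hμ hν (by linarith [ht.2]) ht.1.le (by ring)
  have he : μ + t • (ν - μ) = (1 - t) • μ + t • ν := by
    rw [smul_sub, sub_smul, one_smul]; abel
  have hφt : φ t ≤ f μ + t * (f ν - f μ) := by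
    calc φ t = f ((1 - t) • μ + t • ν) := by rw [hφdef]; simp only [he]
    _ ≤ (1 - t) * f μ + t * f ν := key
    _ = f μ + t * (f ν - f μ) := by ring
  have h0 : φ 0 = f μ := by simp [hφdef]
  rw [slope_def_field, h0]
  rw [div_le_iff₀ (by linarith [ht.1] : (0:ℝ) < t - 0)]
  nlinarith [ht.1]

lemma clm_apply_eq_sum {S : Type*} [Fintype S] [DecidableEq S]
    (L : (S → ℝ) →L[ℝ] ℝ) (v : S → ℝ) :
    L v = ∑ z, v z * L (Pi.single z 1) := by
  have hv : v = ∑ z, v z • (Pi.single z (1:ℝ) : S → ℝ) := by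
    funext j
    simp [Finset.sum_apply, Pi.single_apply]
  conv_lhs => rw [hv]
  rw [map_sum]
  simp [smul_eq_mul]


open Finset

section Induced
variable {X A : Type*} [Fintype X] [Fintype A] [Nonempty A]
variable (N : ℕ) (p : ℕ → X → A → X → ℝ) (μ0 : X × A → ℝ)

lemma induced_nonneg (hp : ∀ n, 1 ≤ n → n ≤ N → ∀ x a, IsDist (fun x' => p n x a x'))
    (hμ0 : ∀ z, 0 ≤ μ0 z) {π : ℕ → X → A → ℝ} (hπ : IsPolicy N π) :
    ∀ n, n ≤ N → ∀ z, 0 ≤ induced μ0 p π n z := by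
  intro n
  induction n with
  | zero => intro _ z; exact hμ0 z
  | succ n ih =>
    intro hn y
    apply Finset.sum_nonneg
    intro z _
    exact mul_nonneg (mul_nonneg (ih (Nat.le_of_succ_le hn) z)
      ((hp (n+1) (Nat.succ_le_succ (Nat.zero_le n)) hn z.1 z.2).1 y.1))
      ((hπ (n+1) y.1 (Nat.succ_le_succ (Nat.zero_le n)) hn).1 y.2)

lemma induced_marginal (hp : ∀ n, 1 ≤ n → n ≤ N → ∀ x a, IsDist (fun x' => p n x a x'))
    {π : ℕ → X → A → ℝ} (hπ : IsPolicy N π) {n : ℕ} (hn : n + 1 ≤ N) (x' : X) :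
    ∑ a', induced μ0 p π (n+1) (x', a') =
      ∑ z : X × A, induced μ0 p π n z * p (n+1) z.1 z.2 x' := by
  show ∑ a', ∑ z : X × A, induced μ0 p π n z * p (n+1) z.1 z.2 x' * π (n+1) x' a' = _
  rw [Finset.sum_comm]
  refine Finset.sum_congr rfl fun z _ => ?_
  rw [← Finset.mul_sum, (hπ (n+1) x' (Nat.succ_le_succ (Nat.zero_le n)) hn).2, mul_one]

lemma induced_sum (hp : ∀ n, 1 ≤ n → n ≤ N → ∀ x a, IsDist (fun x' => p n x a x'))
    (hμ0 : ∑ z, μ0 z = 1) {π : ℕ → X → A → ℝ} (hπ : IsPolicy N π) :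
    ∀ n, n ≤ N → ∑ z, induced μ0 p π n z = 1 := by
  intro n
  induction n with
  | zero => intro _; exact hμ0
  | succ n ih =>
    intro hn
    rw [Fintype.sum_prod_type]
    calc ∑ x', ∑ a', induced μ0 p π (n+1) (x', a')
        = ∑ x', ∑ z : X × A, induced μ0 p π n z * p (n+1) z.1 z.2 x' :=
          Finset.sum_congr rfl fun x' _ => induced_marginal N p μ0 hp hπ hn x'
      _ = ∑ z : X × A, induced μ0 p π n z * ∑ x', p (n+1) z.1 z.2 x' := by
          rw [Finset.sum_comm]; simp [Finset.mul_sum]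
      _ = 1 := by
          have : ∀ z : X × A, (∑ x', p (n+1) z.1 z.2 x') = 1 := fun z =>
            (hp (n+1) (Nat.succ_le_succ (Nat.zero_le n)) hn z.1 z.2).2
          simp only [this, mul_one]
          exact ih (Nat.le_of_succ_le hn)

/-- Conditional policy realizing a given flow `ν`. -/
noncomputable def mixPolicy (ν : ℕ → X × A → ℝ) : ℕ → X → A → ℝ :=
  fun n x a =>
    if (∑ b, ν n (x, b)) = 0 then (Fintype.card A : ℝ)⁻¹
    else ν n (x, a) / ∑ b, ν n (x, b)

lemma mixPolicy_isPolicy {ν : ℕ → X × A → ℝ}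
    (hν : ∀ n, n ≤ N → ∀ z, 0 ≤ ν n z) : IsPolicy N (mixPolicy ν) := by
  intro n x h1 h2
  by_cases hm : (∑ b, ν n (x, b)) = 0
  · constructor
    · intro a
      simp only [mixPolicy, if_pos hm]
      positivity
    · have : ∀ a : A, mixPolicy ν n x a = (Fintype.card A : ℝ)⁻¹ := fun a => by
        simp only [mixPolicy, if_pos hm]
      simp only [this, Finset.sum_const, card_univ, nsmul_eq_mul]
      rw [mul_inv_cancel₀]
      exact_mod_cast Fintype.card_ne_zero
  · have hpos : 0 < ∑ b, ν n (x, b) :=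
      lt_of_le_of_ne (Finset.sum_nonneg fun b _ => hν n h2 (x, b)) (Ne.symm hm)
    have hval : ∀ a : A, mixPolicy ν n x a = ν n (x, a) / ∑ b, ν n (x, b) := fun a => by
      simp only [mixPolicy, if_neg hm]
    constructor
    · intro a; rw [hval a]; exact div_nonneg (hν n h2 (x, a)) hpos.le
    · simp only [hval]
      rw [← Finset.sum_div, div_self hm]

lemma mixPolicy_induced {ν : ℕ → X × A → ℝ}
    (h0 : ν 0 = μ0)
    (hν : ∀ n, n ≤ N → ∀ z, 0 ≤ ν n z)
    (hmarg : ∀ n, n + 1 ≤ N → ∀ x',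
      ∑ a', ν (n+1) (x', a') = ∑ z : X × A, ν n z * p (n+1) z.1 z.2 x') :
    ∀ n, n ≤ N → induced μ0 p (mixPolicy ν) n = ν n := by
  intro n
  induction n with
  | zero => intro _; exact h0.symm
  | succ n ih =>
    intro hn
    funext y
    have ihn := ih (Nat.le_of_succ_le hn)
    show (∑ z : X × A, induced μ0 p (mixPolicy ν) n z * p (n+1) z.1 z.2 y.1 *
        mixPolicy ν (n+1) y.1 y.2) = ν (n+1) y
    rw [ihn]
    rw [← Finset.sum_mul]
    rw [← hmarg n hn y.1]
    by_cases hm : (∑ b, ν (n+1) (y.1, b)) = 0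
    · rw [hm, zero_mul]
      have := (Finset.sum_eq_zero_iff_of_nonneg
        (fun b _ => hν (n+1) hn (y.1, b))).mp hm y.2 (Finset.mem_univ _)
      rw [← this]
    · rw [show mixPolicy ν (n+1) y.1 y.2 = ν (n+1) (y.1, y.2) / ∑ b, ν (n+1) (y.1, b)
        from by simp only [mixPolicy, if_neg hm], mul_div_cancel₀ _ hm]

end Induced

/-- Proposition 6 (potential game): with the potential-game reward
`r_n(x,a,ν) = −∇f_n(ν)(x,a)` and payoff
`J(π, μ) = Σ_{n=1}^N Σ_{x,a} r_n(x,a,μ_n)·μ^π_n(x,a)`, a policy sequence `π*`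
minimizes `π ↦ Σ_{n=1}^N f_n(μ^π_n)` over all policy sequences if and only if
`(μ^{π*}, π*)` is a Nash equilibrium, i.e. `J(π*, μ^{π*}) ≥ J(π, μ^{π*})` for
every policy sequence `π`. -/
theorem minimizer_iff_nash {X A : Type*} [Fintype X] [Fintype A]
    [DecidableEq X] [DecidableEq A] [Nonempty X] [Nonempty A]
    (N : ℕ) (hN : 1 ≤ N)
    (p : ℕ → X → A → X → ℝ)
    (hp : ∀ n, 1 ≤ n → n ≤ N → ∀ x a, IsDist (fun x' => p n x a x'))
    (μ0 : X × A → ℝ) (hμ0 : IsDist μ0)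
    (f : ℕ → (X × A → ℝ) → ℝ)
    (hconv : ∀ n, 1 ≤ n → n ≤ N →
      ConvexOn ℝ {η : X × A → ℝ | IsDist η} (f n))
    (hdiff : ∀ n, 1 ≤ n → n ≤ N → Differentiable ℝ (f n))
    (πstar : ℕ → X → A → ℝ) (hπstar : IsPolicy N πstar) :
    (∀ π : ℕ → X → A → ℝ, IsPolicy N π →
        ∑ n ∈ Finset.Icc 1 N, f n (induced μ0 p πstar n) ≤
          ∑ n ∈ Finset.Icc 1 N, f n (induced μ0 p π n)) ↔
      (∀ π : ℕ → X → A → ℝ, IsPolicy N π →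
        ∑ n ∈ Finset.Icc 1 N, ∑ z : X × A,
            (-(fderiv ℝ (f n) (induced μ0 p πstar n) (Pi.single z 1))) *
              induced μ0 p π n z ≤
          ∑ n ∈ Finset.Icc 1 N, ∑ z : X × A,
            (-(fderiv ℝ (f n) (induced μ0 p πstar n) (Pi.single z 1))) *
              induced μ0 p πstar n z) := by
  set μs : ℕ → X × A → ℝ := induced μ0 p πstar with hμsdef
  set L : ℕ → (X × A → ℝ) →L[ℝ] ℝ := fun n => fderiv ℝ (f n) (μs n) with hLdef
  have key : ∀ w : ℕ → X × A → ℝ,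
      (∑ n ∈ Finset.Icc 1 N, ∑ z : X × A, (-(L n (Pi.single z 1))) * w n z)
        = -∑ n ∈ Finset.Icc 1 N, L n (w n) := by
    intro w
    rw [← Finset.sum_neg_distrib]
    refine Finset.sum_congr rfl fun n _ => ?_
    rw [clm_apply_eq_sum (L n) (w n), ← Finset.sum_neg_distrib]
    refine Finset.sum_congr rfl fun z _ => ?_
    ring
  have hdist : ∀ (π : ℕ → X → A → ℝ), IsPolicy N π → ∀ n ∈ Finset.Icc 1 N,
      induced μ0 p π n ∈ {η : X × A → ℝ | IsDist η} := by
    intro π hπ n hn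
    rw [Finset.mem_Icc] at hn
    exact ⟨induced_nonneg N p μ0 hp hμ0.1 hπ n hn.2,
      induced_sum N p μ0 hp hμ0.2 hπ n hn.2⟩
  constructor
  · -- minimizer → Nash
    intro hmin π hπ
    set μp : ℕ → X × A → ℝ := induced μ0 p π with hμpdef
    rw [key μp, key μs, neg_le_neg_iff, ← sub_nonneg, ← Finset.sum_sub_distrib]
    have hDeq : ∀ n, L n (μp n) - L n (μs n) = L n (μp n - μs n) := fun n => by
      rw [map_sub]
    simp only [hDeq]
    set D : ℝ := ∑ n ∈ Finset.Icc 1 N, L n (μp n - μs n) with hD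
    set g : ℝ → ℝ := fun t => ∑ n ∈ Finset.Icc 1 N, f n (μs n + t • (μp n - μs n))
      with hgdef
    have hg : HasDerivAt g D 0 := by
      refine HasDerivAt.fun_sum fun n hn => ?_
      rw [Finset.mem_Icc] at hn
      have hline : HasDerivAt (fun t : ℝ => μs n + t • (μp n - μs n)) (μp n - μs n) 0 := by
        simpa using ((hasDerivAt_id (0:ℝ)).smul_const (μp n - μs n)).const_add (μs n)
      have hfd : HasFDerivAt (f n) (L n) (μs n + (0:ℝ) • (μp n - μs n)) := by
        simpa using (hdiff n hn.1 hn.2 (μs n)).hasFDerivAt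
      exact hfd.comp_hasDerivAt 0 hline
    have htend : Filter.Tendsto (slope g 0) (nhdsWithin 0 (Set.Ioi 0)) (nhds D) :=
      (hasDerivAt_iff_tendsto_slope.mp hg).mono_left
        (nhdsWithin_mono _ (fun t ht => ne_of_gt ht))
    refine ge_of_tendsto htend ?_
    filter_upwards [Ioc_mem_nhdsGT_of_mem
      (by norm_num : (0:ℝ) ∈ Set.Ico (0:ℝ) 1)] with t ht
    have hbound : g 0 ≤ g t := by
      set ν : ℕ → X × A → ℝ := fun n z => (1 - t) * μs n z + t * μp n z with hνdef
      have hν0 : ν 0 = μ0 := by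
        funext z
        show (1 - t) * μ0 z + t * μ0 z = μ0 z
        ring
      have hνnn : ∀ n, n ≤ N → ∀ z, 0 ≤ ν n z := by
        intro n hn z
        have h1 := induced_nonneg N p μ0 hp hμ0.1 hπstar n hn z
        have h2 := induced_nonneg N p μ0 hp hμ0.1 hπ n hn z
        exact add_nonneg (mul_nonneg (by linarith [ht.2]) h1) (mul_nonneg ht.1.le h2)
      have hmarg : ∀ n, n + 1 ≤ N → ∀ x',
          ∑ a', ν (n+1) (x', a') = ∑ z : X × A, ν n z * p (n+1) z.1 z.2 x' := by
        intro n hn x'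
        have e1 := induced_marginal N p μ0 hp hπstar hn x'
        have e2 := induced_marginal N p μ0 hp hπ hn x'
        calc ∑ a', ν (n+1) (x', a')
            = (1 - t) * ∑ a', μs (n+1) (x', a') + t * ∑ a', μp (n+1) (x', a') := by
              rw [hνdef, Finset.sum_add_distrib, Finset.mul_sum, Finset.mul_sum]
          _ = (1 - t) * ∑ z : X × A, μs n z * p (n+1) z.1 z.2 x'
                + t * ∑ z : X × A, μp n z * p (n+1) z.1 z.2 x' := by rw [e1, e2]
          _ = ∑ z : X × A, ν n z * p (n+1) z.1 z.2 x' := by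
              rw [Finset.mul_sum, Finset.mul_sum, ← Finset.sum_add_distrib]
              exact Finset.sum_congr rfl fun z _ => by rw [hνdef]; ring
      have hind := mixPolicy_induced N p μ0 hν0 hνnn hmarg
      have hpol := mixPolicy_isPolicy N (ν := ν) hνnn
      have hm := hmin (mixPolicy ν) hpol
      have hg0 : g 0 = ∑ n ∈ Finset.Icc 1 N, f n (μs n) := by
        rw [hgdef]
        exact Finset.sum_congr rfl fun n _ => by norm_num
      have hgt : g t = ∑ n ∈ Finset.Icc 1 N, f n (induced μ0 p (mixPolicy ν) n) := by
        rw [hgdef]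
        refine Finset.sum_congr rfl fun n hn => ?_
        rw [Finset.mem_Icc] at hn
        rw [hind n hn.2]
        congr 1
        funext z
        show μs n z + t * (μp n z - μs n z) = (1 - t) * μs n z + t * μp n z
        ring
      rw [hg0, hgt]
      exact hm
    rw [slope_def_field]
    have ht0 : (0:ℝ) < t - 0 := by linarith [ht.1]
    have hnum : (0:ℝ) ≤ g t - g 0 := by linarith
    positivity
  · -- Nash → minimizer
    intro hnash π hπ
    have h := hnash π hπ
    rw [key (induced μ0 p π), key μs, neg_le_neg_iff] at h
    have hgi : ∀ n ∈ Finset.Icc 1 N,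
        L n (induced μ0 p π n - μs n) ≤ f n (induced μ0 p π n) - f n (μs n) := by
      intro n hn
      have hn' := Finset.mem_Icc.mp hn
      exact grad_ineq (hconv n hn'.1 hn'.2) (hdiff n hn'.1 hn'.2)
        (hdist πstar hπstar n hn) (hdist π hπ n hn)
    have hsum := Finset.sum_le_sum hgi
    rw [Finset.sum_sub_distrib] at hsum
    have hl : ∑ n ∈ Finset.Icc 1 N, L n (induced μ0 p π n - μs n)
        = (∑ n ∈ Finset.Icc 1 N, L n (induced μ0 p π n))
          - ∑ n ∈ Finset.Icc 1 N, L n (μs n) := by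
      rw [← Finset.sum_sub_distrib]
      exact Finset.sum_congr rfl fun n _ => by rw [map_sub]
    rw [hl] at hsum
    linarith
end

section
/- Let μ and μ' be sequences in M_{μ0} induced by componentwise positive policy sequences π and π' respectively (π_n(a|x) > 0 and π'_n(a|x) > 0 for all n, x, a), and define Γ(μ, μ') = Σ_{n=1}^N Σ_{(x,a)} μ_n(x,a) log(π_n(a|x)/π'_n(a|x)). Then the symmetrized divergence satisfies Γ(μ, μ') + Γ(μ', μ) = D(μ_{0:N}, μ'_{0:N}) + D(μ'_{0:N}, μ_{0:N}) ≥ 0, where μ_{0:N}, μ'_{0:N} are the induced path distributions on (X×A)^{N+1} and D is the KL divergence. -/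
open Finset

/-- The path distribution `μ^π_{0:N}` on `(X × A)^{N+1}`. -/
noncomputable def pathDist {X A : Type*} [Fintype X] [Fintype A]
    (N : ℕ) (μ0 : X × A → ℝ) (p : ℕ → X → A → X → ℝ) (π : ℕ → X → A → ℝ)
    (y : Fin (N + 1) → X × A) : ℝ :=
  μ0 (y 0) * ∏ n : Fin N,
    (p ((n : ℕ) + 1) (y n.castSucc).1 (y n.castSucc).2 (y n.succ).1 *
      π ((n : ℕ) + 1) (y n.succ).1 (y n.succ).2)

/-- Kullback–Leibler divergence between two probability mass functions on a
finite type, with the convention `0 · log 0 = 0` (automatic in `ℝ`). -/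
noncomputable def kl {S : Type*} [Fintype S] (η ν : S → ℝ) : ℝ :=
  ∑ z, η z * Real.log (η z / ν z)

section aux
variable {X A : Type*} [Fintype X] [Fintype A]

lemma pathDist_snoc (M : ℕ) (μ0 : X × A → ℝ) (p : ℕ → X → A → X → ℝ)
    (π : ℕ → X → A → ℝ) (yh : Fin (M + 1) → X × A) (z : X × A) :
    pathDist (M + 1) μ0 p π (Fin.snoc yh z) =
      pathDist M μ0 p π yh *
        (p (M + 1) (yh (Fin.last M)).1 (yh (Fin.last M)).2 z.1 *
          π (M + 1) z.1 z.2) := by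
  unfold pathDist
  rw [Fin.prod_univ_castSucc]
  have h0 : (Fin.snoc yh z : Fin (M + 2) → X × A) 0 = yh 0 := by
    have : (0 : Fin (M + 2)) = Fin.castSucc 0 := rfl
    rw [this, Fin.snoc_castSucc]
  simp only [h0, Fin.snoc_castSucc, Fin.succ_castSucc, Fin.snoc_last, Fin.succ_last,
    Fin.coe_castSucc, Fin.val_last]
  ring

lemma trans_sum_one (p : ℕ → X → A → X → ℝ) (π : ℕ → X → A → ℝ) (m : ℕ) (x : X) (a : A)
    (hp : IsDist (fun x' => p m x a x')) (hπ : ∀ x', IsDist (π m x')) :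
    ∑ z : X × A, p m x a z.1 * π m z.1 z.2 = 1 := by
  rw [Fintype.sum_prod_type]
  have h : ∀ x', ∑ a', p m x a x' * π m x' a' = p m x a x' := by
    intro x'
    rw [← Finset.mul_sum, (hπ x').2, mul_one]
  rw [Finset.sum_congr rfl fun x' _ => h x', hp.2]

lemma sum_Icc_one (g : ℕ → ℝ) (N : ℕ) :
    ∑ m ∈ Icc 1 N, g m = ∑ i ∈ range N, g (i + 1) := by
  induction N with
  | zero => simp
  | succ n ih =>
      rw [Finset.sum_range_succ, ← ih, Finset.sum_Icc_succ_top (by omega)]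

/-- Re-index a sum over paths of length `M+2` via `Fin.snoc`. -/
lemma sum_snoc (M : ℕ) (F : (Fin (M + 2) → X × A) → ℝ) :
    ∑ y : Fin (M + 2) → X × A, F y =
      ∑ yh : Fin (M + 1) → X × A, ∑ z : X × A, F (Fin.snoc yh z) := by
  rw [← ((Equiv.prodComm ((Fin (M + 1)) → X × A) (X × A)).trans
      (Fin.snocEquiv (fun _ => X × A))).sum_comp F, Fintype.sum_prod_type]
  exact Finset.sum_congr rfl fun yh _ => Finset.sum_congr rfl fun z _ => rfl

/-- The marginal of the path distribution at time `k` is `induced k`. -/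
lemma marginal (μ0 : X × A → ℝ) (p : ℕ → X → A → X → ℝ) (π : ℕ → X → A → ℝ) :
    ∀ M : ℕ, (∀ n, 1 ≤ n → n ≤ M → ∀ x a, IsDist (fun x' => p n x a x')) →
      (∀ n x, 1 ≤ n → n ≤ M → IsDist (π n x)) →
      ∀ (k : Fin (M + 1)) (f : X × A → ℝ),
        ∑ y : Fin (M + 1) → X × A, pathDist M μ0 p π y * f (y k) =
          ∑ z : X × A, induced μ0 p π (k : ℕ) z * f z := by
  intro M
  induction M with
  | zero =>
      intro _ _ k f
      have hk : k = 0 := Fin.fin_one_eq_zero k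
      subst hk
      rw [← (Equiv.funUnique (Fin 1) (X × A)).symm.sum_comp]
      simp [pathDist, induced]
  | succ M ih =>
      intro hp hπ k f
      have ih' := ih (fun n h1 h2 => hp n h1 (h2.trans (Nat.le_succ M)))
        (fun n x h1 h2 => hπ n x h1 (h2.trans (Nat.le_succ M)))
      rw [sum_snoc]
      induction k using Fin.lastCases with
      | last =>
          simp only [Fin.snoc_last, Fin.val_last]
          rw [Finset.sum_comm]
          have inner : ∀ z : X × A,
              ∑ yh : Fin (M + 1) → X × A,
                pathDist (M + 1) μ0 p π (Fin.snoc yh z) * f z =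
              induced μ0 p π (M + 1) z * f z := by
            intro z
            have h1 : ∀ yh : Fin (M + 1) → X × A,
                pathDist (M + 1) μ0 p π (Fin.snoc yh z) * f z =
                pathDist M μ0 p π yh *
                  (p (M + 1) (yh (Fin.last M)).1 (yh (Fin.last M)).2 z.1 *
                    π (M + 1) z.1 z.2 * f z) := by
              intro yh; rw [pathDist_snoc]; ring
            rw [Finset.sum_congr rfl fun yh _ => h1 yh,
              ih' (Fin.last M) (fun w => p (M + 1) w.1 w.2 z.1 * π (M + 1) z.1 z.2 * f z)]
            show _ = induced μ0 p π (M + 1) z * f z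
            simp only [induced, Fin.val_last, Finset.sum_mul]
            exact Finset.sum_congr rfl fun w _ => by ring
          exact Finset.sum_congr rfl fun z _ => inner z
      | cast j =>
          simp only [Fin.snoc_castSucc, Fin.coe_castSucc]
          have h1 : ∀ yh : Fin (M + 1) → X × A,
              ∑ z : X × A, pathDist (M + 1) μ0 p π (Fin.snoc yh z) * f (yh j) =
              pathDist M μ0 p π yh * f (yh j) := by
            intro yh
            have h2 : ∀ z : X × A,
                pathDist (M + 1) μ0 p π (Fin.snoc yh z) * f (yh j) =
                pathDist M μ0 p π yh * f (yh j) *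
                  (p (M + 1) (yh (Fin.last M)).1 (yh (Fin.last M)).2 z.1 *
                    π (M + 1) z.1 z.2) := by
              intro z; rw [pathDist_snoc]; ring
            rw [Finset.sum_congr rfl fun z _ => h2 z, ← Finset.mul_sum,
              trans_sum_one p π (M + 1) _ _
                (hp (M + 1) (Nat.le_add_left 1 M) le_rfl _ _)
                (fun x' => hπ (M + 1) x' (Nat.le_add_left 1 M) le_rfl),
              mul_one]
          rw [Finset.sum_congr rfl fun yh _ => h1 yh, ih' j f]

/-- Factor the path distribution into the `μ0·p` part and the `π` part. -/
lemma pathDist_factor (N : ℕ) (μ0 : X × A → ℝ) (p : ℕ → X → A → X → ℝ)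
    (π : ℕ → X → A → ℝ) (y : Fin (N + 1) → X × A) :
    pathDist N μ0 p π y =
      (μ0 (y 0) * ∏ n : Fin N,
          p ((n : ℕ) + 1) (y n.castSucc).1 (y n.castSucc).2 (y n.succ).1) *
        ∏ n : Fin N, π ((n : ℕ) + 1) (y n.succ).1 (y n.succ).2 := by
  unfold pathDist
  rw [Finset.prod_mul_distrib]
  ring

/-- The KL divergence between two path distributions equals `Γ`. -/
lemma kl_pathDist_eq (N : ℕ) (μ0 : X × A → ℝ) (p : ℕ → X → A → X → ℝ)
    (π π' : ℕ → X → A → ℝ)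
    (hμ0 : ∀ y, 0 ≤ μ0 y)
    (hp : ∀ n, 1 ≤ n → n ≤ N → ∀ x a, IsDist (fun x' => p n x a x'))
    (hπ : ∀ n x, 1 ≤ n → n ≤ N → IsDist (π n x))
    (hπpos : ∀ n x a, 1 ≤ n → n ≤ N → 0 < π n x a)
    (hπ'pos : ∀ n x a, 1 ≤ n → n ≤ N → 0 < π' n x a) :
    kl (pathDist N μ0 p π) (pathDist N μ0 p π') =
      ∑ n ∈ Icc 1 N, ∑ z : X × A,
        induced μ0 p π n z * Real.log (π n z.1 z.2 / π' n z.1 z.2) := by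
  have hQpos : ∀ (σ : ℕ → X → A → ℝ), (∀ n x a, 1 ≤ n → n ≤ N → 0 < σ n x a) →
      ∀ y : Fin (N + 1) → X × A,
      0 < ∏ n : Fin N, σ ((n : ℕ) + 1) (y n.succ).1 (y n.succ).2 := by
    intro σ hσ y
    exact Finset.prod_pos fun n _ =>
      hσ ((n : ℕ) + 1) _ _ (Nat.le_add_left 1 n) (Nat.succ_le_of_lt n.isLt)
  have step1 : kl (pathDist N μ0 p π) (pathDist N μ0 p π') =
      ∑ y : Fin (N + 1) → X × A, pathDist N μ0 p π y *
        ∑ n : Fin N, Real.log (π ((n : ℕ) + 1) (y n.succ).1 (y n.succ).2 /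
          π' ((n : ℕ) + 1) (y n.succ).1 (y n.succ).2) := by
    unfold kl
    refine Finset.sum_congr rfl fun y _ => ?_
    by_cases hy : pathDist N μ0 p π y = 0
    · simp [hy]
    · have hQ := hQpos π hπpos y
      have hQ' := hQpos π' hπ'pos y
      have hfac := pathDist_factor N μ0 p π y
      have hfac' := pathDist_factor N μ0 p π' y
      have hBnn : 0 ≤ μ0 (y 0) * ∏ n : Fin N,
          p ((n : ℕ) + 1) (y n.castSucc).1 (y n.castSucc).2 (y n.succ).1 :=
        mul_nonneg (hμ0 _) (Finset.prod_nonneg fun n _ =>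
          (hp ((n : ℕ) + 1) (Nat.le_add_left 1 n) (Nat.succ_le_of_lt n.isLt) _ _).1 _)
      have hPnn : 0 ≤ pathDist N μ0 p π y := by
        rw [hfac]; exact mul_nonneg hBnn hQ.le
      have hP : 0 < pathDist N μ0 p π y := lt_of_le_of_ne hPnn (Ne.symm hy)
      have hB : 0 < μ0 (y 0) * ∏ n : Fin N,
          p ((n : ℕ) + 1) (y n.castSucc).1 (y n.castSucc).2 (y n.succ).1 := by
        rcases hBnn.lt_or_eq with h | h
        · exact h
        · exfalso; apply hy; rw [hfac, ← h, zero_mul]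
      have hlog : Real.log (pathDist N μ0 p π y / pathDist N μ0 p π' y) =
          ∑ n : Fin N, Real.log (π ((n : ℕ) + 1) (y n.succ).1 (y n.succ).2 /
            π' ((n : ℕ) + 1) (y n.succ).1 (y n.succ).2) := by
        have hlogQ : Real.log (∏ n : Fin N, π ((n : ℕ) + 1) (y n.succ).1 (y n.succ).2) =
            ∑ n : Fin N, Real.log (π ((n : ℕ) + 1) (y n.succ).1 (y n.succ).2) :=
          Real.log_prod (s := Finset.univ)
            (f := fun n : Fin N => π ((n : ℕ) + 1) (y n.succ).1 (y n.succ).2)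
            (fun n _ => (hπpos ((n : ℕ) + 1) _ _ (Nat.le_add_left 1 (n : ℕ))
              (Nat.succ_le_of_lt n.isLt)).ne')
        have hlogQ' : Real.log (∏ n : Fin N, π' ((n : ℕ) + 1) (y n.succ).1 (y n.succ).2) =
            ∑ n : Fin N, Real.log (π' ((n : ℕ) + 1) (y n.succ).1 (y n.succ).2) :=
          Real.log_prod (s := Finset.univ)
            (f := fun n : Fin N => π' ((n : ℕ) + 1) (y n.succ).1 (y n.succ).2)
            (fun n _ => (hπ'pos ((n : ℕ) + 1) _ _ (Nat.le_add_left 1 (n : ℕ))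
              (Nat.succ_le_of_lt n.isLt)).ne')
        rw [hfac, hfac', mul_div_mul_left _ _ hB.ne', Real.log_div hQ.ne' hQ'.ne',
          hlogQ, hlogQ', ← Finset.sum_sub_distrib]
        exact Finset.sum_congr rfl fun n _ => (Real.log_div
          (hπpos ((n : ℕ) + 1) _ _ (Nat.le_add_left 1 n) (Nat.succ_le_of_lt n.isLt)).ne'
          (hπ'pos ((n : ℕ) + 1) _ _ (Nat.le_add_left 1 n) (Nat.succ_le_of_lt n.isLt)).ne').symm
      rw [hlog]
  rw [step1]
  have step2 : ∀ y : Fin (N + 1) → X × A, pathDist N μ0 p π y *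
      ∑ n : Fin N, Real.log (π ((n : ℕ) + 1) (y n.succ).1 (y n.succ).2 /
        π' ((n : ℕ) + 1) (y n.succ).1 (y n.succ).2) =
      ∑ n : Fin N, pathDist N μ0 p π y *
        Real.log (π ((n : ℕ) + 1) (y n.succ).1 (y n.succ).2 /
          π' ((n : ℕ) + 1) (y n.succ).1 (y n.succ).2) := fun y => Finset.mul_sum _ _ _
  rw [Finset.sum_congr rfl fun y _ => step2 y, Finset.sum_comm]
  have step3 : ∀ n : Fin N,
      ∑ y : Fin (N + 1) → X × A, pathDist N μ0 p π y *
        Real.log (π ((n : ℕ) + 1) (y n.succ).1 (y n.succ).2 /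
          π' ((n : ℕ) + 1) (y n.succ).1 (y n.succ).2) =
      ∑ z : X × A, induced μ0 p π ((n : ℕ) + 1) z *
        Real.log (π ((n : ℕ) + 1) z.1 z.2 / π' ((n : ℕ) + 1) z.1 z.2) := by
    intro n
    have := marginal μ0 p π N hp hπ n.succ
      (fun z => Real.log (π ((n : ℕ) + 1) z.1 z.2 / π' ((n : ℕ) + 1) z.1 z.2))
    simpa [Fin.val_succ] using this
  rw [Finset.sum_congr rfl fun n _ => step3 n, sum_Icc_one, ← Fin.sum_univ_eq_sum_range]

end aux

/-- The symmetrized divergence satisfies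
`Γ(μ, μ') + Γ(μ', μ) = D(μ_{0:N}, μ'_{0:N}) + D(μ'_{0:N}, μ_{0:N}) ≥ 0`, where
`μ = μ^π`, `μ' = μ^{π'}` are induced by componentwise positive policy
sequences `π`, `π'` from the same initial distribution `μ0`. -/
theorem gamma_symmetrized_eq_kl_nonneg {X A : Type*} [Fintype X] [Fintype A]
    [Nonempty X] [Nonempty A]
    (N : ℕ) (hN : 1 ≤ N)
    (p : ℕ → X → A → X → ℝ)
    (hp : ∀ n, 1 ≤ n → n ≤ N → ∀ x a, IsDist (fun x' => p n x a x'))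
    (μ0 : X × A → ℝ) (hμ0 : IsDist μ0)
    (π π' : ℕ → X → A → ℝ)
    (hπ : ∀ n x, 1 ≤ n → n ≤ N → IsDist (π n x))
    (hπ' : ∀ n x, 1 ≤ n → n ≤ N → IsDist (π' n x))
    (hπpos : ∀ n x a, 1 ≤ n → n ≤ N → 0 < π n x a)
    (hπ'pos : ∀ n x a, 1 ≤ n → n ≤ N → 0 < π' n x a) :
    (∑ n ∈ Finset.Icc 1 N, ∑ z : X × A,
        induced μ0 p π n z * Real.log (π n z.1 z.2 / π' n z.1 z.2)) +
      (∑ n ∈ Finset.Icc 1 N, ∑ z : X × A,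
        induced μ0 p π' n z * Real.log (π' n z.1 z.2 / π n z.1 z.2)) =
      kl (pathDist N μ0 p π) (pathDist N μ0 p π') +
        kl (pathDist N μ0 p π') (pathDist N μ0 p π) ∧
    0 ≤ kl (pathDist N μ0 p π) (pathDist N μ0 p π') +
        kl (pathDist N μ0 p π') (pathDist N μ0 p π) := by
  have hQpos : ∀ (σ : ℕ → X → A → ℝ), (∀ n x a, 1 ≤ n → n ≤ N → 0 < σ n x a) →
      ∀ y : Fin (N + 1) → X × A,
      0 < ∏ n : Fin N, σ ((n : ℕ) + 1) (y n.succ).1 (y n.succ).2 := by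
    intro σ hσ y
    exact Finset.prod_pos fun n _ =>
      hσ ((n : ℕ) + 1) _ _ (Nat.le_add_left 1 n) (Nat.succ_le_of_lt n.isLt)
  have hBnn : ∀ y : Fin (N + 1) → X × A, 0 ≤ μ0 (y 0) * ∏ n : Fin N,
      p ((n : ℕ) + 1) (y n.castSucc).1 (y n.castSucc).2 (y n.succ).1 := fun y =>
    mul_nonneg (hμ0.1 _) (Finset.prod_nonneg fun n _ =>
      (hp ((n : ℕ) + 1) (Nat.le_add_left 1 n) (Nat.succ_le_of_lt n.isLt) _ _).1 _)
  constructor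
  · rw [kl_pathDist_eq N μ0 p π π' hμ0.1 hp hπ hπpos hπ'pos,
      kl_pathDist_eq N μ0 p π' π hμ0.1 hp hπ' hπ'pos hπpos]
  · unfold kl
    rw [← Finset.sum_add_distrib]
    refine Finset.sum_nonneg fun y _ => ?_
    have hfac := pathDist_factor N μ0 p π y
    have hfac' := pathDist_factor N μ0 p π' y
    have hQ := hQpos π hπpos y
    have hQ' := hQpos π' hπ'pos y
    by_cases hy : pathDist N μ0 p π y = 0
    · have hB0 : μ0 (y 0) * ∏ n : Fin N,
          p ((n : ℕ) + 1) (y n.castSucc).1 (y n.castSucc).2 (y n.succ).1 = 0 := by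
        rcases mul_eq_zero.mp (hfac ▸ hy) with h | h
        · exact h
        · exact absurd h hQ.ne'
      have hy' : pathDist N μ0 p π' y = 0 := by rw [hfac', hB0, zero_mul]
      simp [hy, hy']
    · have hPnn : 0 ≤ pathDist N μ0 p π y := by
        rw [hfac]; exact mul_nonneg (hBnn y) hQ.le
      have hP : 0 < pathDist N μ0 p π y := lt_of_le_of_ne hPnn (Ne.symm hy)
      have hB : 0 < μ0 (y 0) * ∏ n : Fin N,
          p ((n : ℕ) + 1) (y n.castSucc).1 (y n.castSucc).2 (y n.succ).1 := by
        rcases (hBnn y).lt_or_eq with h | h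
        · exact h
        · exfalso; apply hy; rw [hfac, ← h, zero_mul]
      have hP' : 0 < pathDist N μ0 p π' y := by
        rw [hfac']; exact mul_pos hB hQ'
      rw [Real.log_div hP.ne' hP'.ne', Real.log_div hP'.ne' hP.ne']
      rcases le_total (pathDist N μ0 p π y) (pathDist N μ0 p π' y) with h | h
      · have hl := Real.log_le_log hP h
        nlinarith
      · have hl := Real.log_le_log hP' h
        nlinarith
end
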